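/- arXiv:0708.3419 — 3 statements merged into one kernel-verified Lean document; each statement's English description precedes it below -/
import Mathlib

section
/- Let K^{BTBM}_t(x) = 2 ∫_0^∞ (2πs)^{-d/2} e^{-|x|²/(2s)} · (2πt)^{-1/2} e^{-s²/(2t)} ds be the Brownian-time Brownian motion density. Then for 1 ≤ d ≤ 3 there is a constant C_d > 0 such that ∫_{ℝ^d} [K^{BTBM}_t(x)]² dx = C_d · t^{-d/4} for all t > 0; moreover for d ≥ 4 the integral ∫_{ℝ^d} [K^{BTBM}_t(x)]² dx is infinite. -/
/-!
`K_t(x) = 2 ∫₀^∞ p_s(x) g_t(s) ds` mixes the heat kernels `p_s` against the Gaussian density `g_t`.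
By Tonelli and the Chapman–Kolmogorov identity `∫ p_s p_{s'} = (2π(s+s'))^{-d/2}`,
`‖K_t‖₂² = 4 ∫∫_{s,s'>0} (2π(s+s'))^{-d/2} g_t(s) g_t(s') ds ds'`. Its only singularity is at
`s = s' = 0`, where the integrand has size `(s+s')^{-d/2}`: for `d ≤ 3` the bound
`(s+s')^{-d/2} ≤ (s s')^{-d/4}` makes it at most the square of `∫ s^{-d/4} g_t(s) ds < ∞`, while for
`d ≥ 4` the region `s' ≤ s ≤ 1` alone contributes a multiple of `∫₀¹ s^{1-d/2} ds = ∞`.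
The power of `t` comes from the self-similarity `K_{λ⁴t}(λx) = λ^{-d} K_t(x)`.
-/

open MeasureTheory Real Set
open scoped ENNReal

noncomputable def heatK (d : ℕ) (s : ℝ) (x : EuclideanSpace ℝ (Fin d)) : ℝ :=
  (2 * π * s) ^ (-(d : ℝ) / 2) * Real.exp (-‖x‖ ^ 2 / (2 * s))

noncomputable def btbmK (d : ℕ) (t : ℝ) (x : EuclideanSpace ℝ (Fin d)) : ℝ :=
  2 * ∫ s in Set.Ioi (0 : ℝ),
    heatK d s x * ((2 * π * t) ^ (-(1 : ℝ) / 2) * Real.exp (-s ^ 2 / (2 * t)))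

namespace BTBM

lemma add_rpow_le_rpow_half_mul_rpow_half {a b e : ℝ} (ha : 0 < a) (hb : 0 < b) (he : e ≤ 0) :
    (a + b) ^ e ≤ a ^ (e / 2) * b ^ (e / 2) := by
  rw [← mul_rpow ha.le hb.le, show (a + b) ^ e = ((a + b) ^ 2) ^ (e / 2) by
    rw [← rpow_natCast, ← rpow_mul (by positivity)]; ring_nf]
  exact rpow_le_rpow_of_nonpos (by positivity) (by nlinarith) (by linarith)

lemma lintegral_sq_lintegral {α β : Type*} [MeasurableSpace α] [MeasurableSpace β]
    {μ : Measure α} {ν : Measure β} [SFinite μ] [SFinite ν] {F : α → β → ℝ≥0∞}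
    (hF : Measurable (Function.uncurry F)) :
    ∫⁻ y, (∫⁻ x, F x y ∂μ) ^ 2 ∂ν = ∫⁻ x, ∫⁻ x', ∫⁻ y, F x y * F x' y ∂ν ∂μ ∂μ := by
  have hF₁ : Measurable fun p : (β × α) × α => F p.1.2 p.1.1 * F p.2 p.1.1 :=
    (hF.comp (f := fun p : (β × α) × α => (p.1.2, p.1.1)) (by fun_prop)).mul
      (hF.comp (f := fun p : (β × α) × α => (p.2, p.1.1)) (by fun_prop))
  calc ∫⁻ y, (∫⁻ x, F x y ∂μ) ^ 2 ∂ν = ∫⁻ y, ∫⁻ x, ∫⁻ x', F x y * F x' y ∂μ ∂μ ∂ν := by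
        refine lintegral_congr fun y => ?_
        have hFy : Measurable fun x => F x y := hF.comp (measurable_id.prodMk measurable_const)
        rw [sq, lintegral_lintegral_mul hFy.aemeasurable hFy.aemeasurable]
    _ = ∫⁻ x, ∫⁻ y, ∫⁻ x', F x y * F x' y ∂μ ∂ν ∂μ :=
        lintegral_lintegral_swap hF₁.lintegral_prod_right'.aemeasurable
    _ = ∫⁻ x, ∫⁻ x', ∫⁻ y, F x y * F x' y ∂ν ∂μ ∂μ :=
        lintegral_congr fun x => lintegral_lintegral_swap
          (hF₁.comp ((measurable_fst.prodMk measurable_const).prodMk measurable_snd)).aemeasurable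

lemma integrable_exp_neg_mul_sq_norm {V : Type*} [NormedAddCommGroup V] [InnerProductSpace ℝ V]
    [FiniteDimensional ℝ V] [MeasurableSpace V] [BorelSpace V] {b : ℝ} (hb : 0 < b) :
    Integrable (fun v : V => Real.exp (-b * ‖v‖ ^ 2)) := by
  refine (GaussianFourier.integrable_cexp_neg_mul_sq_norm_add (V := V) (b := b)
    (by simpa using hb) 0 0).norm.congr (.of_forall fun v => ?_)
  simp [Complex.norm_exp, ← Complex.ofReal_pow]

noncomputable def gaussDensity (t s : ℝ) : ℝ :=
  (2 * π * t) ^ (-(1 : ℝ) / 2) * Real.exp (-s ^ 2 / (2 * t))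

section gaussDensity

variable {t : ℝ}

lemma gaussDensity_pos (ht : 0 < t) (s : ℝ) : 0 < gaussDensity t s := by
  unfold gaussDensity; positivity

@[fun_prop]
lemma measurable_gaussDensity (t : ℝ) : Measurable (gaussDensity t) := by
  unfold gaussDensity; fun_prop

lemma gaussDensity_le_of_le (ht : 0 < t) {s s' : ℝ} (hs : 0 ≤ s) (hss' : s ≤ s') :
    gaussDensity t s' ≤ gaussDensity t s := by
  unfold gaussDensity
  gcongr

lemma gaussDensity_scale {b : ℝ} (hb : 0 < b) (ht : 0 < t) (s : ℝ) :
    gaussDensity (b ^ 2 * t) (b * s) = b⁻¹ * gaussDensity t s := by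
  have hb2 : (b ^ 2) ^ (-(1 : ℝ) / 2) = b⁻¹ := by
    rw [← rpow_natCast, ← rpow_mul hb.le]; norm_num [rpow_neg_one]
  unfold gaussDensity
  rw [show 2 * π * (b ^ 2 * t) = b ^ 2 * (2 * π * t) by ring,
    mul_rpow (by positivity) (by positivity), hb2]
  field_simp

lemma integrableOn_rpow_mul_gaussDensity (ht : 0 < t) {p : ℝ} (hp : -1 < p) :
    IntegrableOn (fun s => s ^ p * gaussDensity t s) (Ioi 0) := by
  have hb : 0 < (2 * t)⁻¹ := by positivity
  refine IntegrableOn.congr_fun ((integrableOn_rpow_mul_exp_neg_mul_sq hb hp).const_mul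
    ((2 * π * t) ^ (-(1 : ℝ) / 2))) (fun s _ => ?_) measurableSet_Ioi
  simp only [gaussDensity]
  rw [mul_left_comm]
  congr 3
  ring

end gaussDensity

section heatK

variable {d : ℕ}

lemma heatK_nonneg {s : ℝ} (hs : 0 ≤ s) (x : EuclideanSpace ℝ (Fin d)) : 0 ≤ heatK d s x := by
  unfold heatK; positivity

lemma measurable_heatK_uncurry :
    Measurable (fun p : ℝ × EuclideanSpace ℝ (Fin d) => heatK d p.1 p.2) := by
  unfold heatK; fun_prop

-- `e^{-a} ≤ d!/a^d` with `a = ‖x‖²/(2s)` trades the singular factor `s^{-d/2}` for `s^{d/2}`.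
lemma exists_heatK_le_mul_rpow {x : EuclideanSpace ℝ (Fin d)} (hx : x ≠ 0) :
    ∃ C, ∀ s > 0, heatK d s x ≤ C * s ^ ((d : ℝ) / 2) := by
  refine ⟨(2 * π) ^ (-(d : ℝ) / 2) * (d.factorial * 2 ^ d / ‖x‖ ^ (2 * d)), fun s hs => ?_⟩
  have ha : 0 < ‖x‖ ^ 2 / (2 * s) := by positivity
  have hexp : Real.exp (-‖x‖ ^ 2 / (2 * s)) ≤ d.factorial / (‖x‖ ^ 2 / (2 * s)) ^ d := by
    have := Real.pow_div_factorial_le_exp _ ha.le d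
    rw [neg_div, exp_neg, inv_eq_one_div, div_le_div_iff₀ (exp_pos _) (by positivity)]
    rw [div_le_iff₀ (by positivity)] at this
    linarith
  have hs_pow : s ^ (-(d : ℝ) / 2) * s ^ d = s ^ ((d : ℝ) / 2) := by
    rw [← rpow_natCast, ← rpow_add hs]; ring_nf
  calc heatK d s x ≤ (2 * π * s) ^ (-(d : ℝ) / 2) * (d.factorial / (‖x‖ ^ 2 / (2 * s)) ^ d) := by
        unfold heatK; gcongr
    _ = _ := by
        rw [mul_rpow (by positivity) hs.le, ← hs_pow, div_pow, mul_pow, ← pow_mul]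
        field_simp

lemma lintegral_heatK_mul_heatK {s s' : ℝ} (hs : 0 < s) (hs' : 0 < s') :
    ∫⁻ x, ENNReal.ofReal (heatK d s x * heatK d s' x) =
      ENNReal.ofReal ((2 * π * (s + s')) ^ (-(d : ℝ) / 2)) := by
  set b := (s + s') / (2 * s * s')
  have hb : 0 < b := by positivity
  have hprod : ∀ x : EuclideanSpace ℝ (Fin d), heatK d s x * heatK d s' x =
      (2 * π * s) ^ (-(d : ℝ) / 2) * (2 * π * s') ^ (-(d : ℝ) / 2) * Real.exp (-b * ‖x‖ ^ 2) := by
    intro x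
    unfold heatK
    rw [mul_mul_mul_comm, ← Real.exp_add]
    congr 2
    simp only [b]
    field_simp
    ring
  rw [← ofReal_integral_eq_lintegral_ofReal
    ((integrable_exp_neg_mul_sq_norm hb).const_mul _ |>.congr (.of_forall fun x => (hprod x).symm))
    (.of_forall fun x => mul_nonneg (heatK_nonneg hs.le x) (heatK_nonneg hs'.le x))]
  simp_rw [hprod]
  rw [integral_const_mul, GaussianFourier.integral_rexp_neg_mul_sq_norm hb,
    finrank_euclideanSpace_fin, ← mul_rpow (by positivity) (by positivity),
    neg_div, rpow_neg (by positivity), ← inv_rpow (by positivity), ← mul_rpow (by positivity)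
      (by positivity), rpow_neg (by positivity), ← inv_rpow (by positivity)]
  congr 2
  simp only [b]
  field_simp

lemma heatK_scale {l : ℝ} (hl : 0 < l) {s : ℝ} (hs : 0 < s) (x : EuclideanSpace ℝ (Fin d)) :
    heatK d (l ^ 2 * s) (l • x) = (l ^ d)⁻¹ * heatK d s x := by
  have hl2 : (l ^ 2) ^ (-(d : ℝ) / 2) = (l ^ d)⁻¹ := by
    rw [← rpow_natCast l 2, ← rpow_mul hl.le, ← rpow_natCast, ← rpow_neg hl.le]; ring_nf
  unfold heatK
  rw [show 2 * π * (l ^ 2 * s) = l ^ 2 * (2 * π * s) by ring,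
    mul_rpow (by positivity) (by positivity), hl2, norm_smul, norm_of_nonneg hl.le]
  field_simp

end heatK

section btbmK

variable {d : ℕ} {t : ℝ}

lemma btbmK_eq (x : EuclideanSpace ℝ (Fin d)) :
    btbmK d t x = 2 * ∫ s in Ioi (0 : ℝ), heatK d s x * gaussDensity t s := rfl

lemma integrableOn_heatK_mul_gaussDensity (ht : 0 < t) {x : EuclideanSpace ℝ (Fin d)}
    (hx : x ≠ 0) : IntegrableOn (fun s => heatK d s x * gaussDensity t s) (Ioi 0) := by
  obtain ⟨C, hC⟩ := exists_heatK_le_mul_rpow hx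
  have hp : (-1 : ℝ) < d / 2 := by linarith [(by positivity : (0 : ℝ) ≤ d / 2)]
  refine Integrable.mono' ((integrableOn_rpow_mul_gaussDensity ht hp).const_mul C)
    ((measurable_heatK_uncurry.comp (measurable_id.prodMk measurable_const)).mul
      (measurable_gaussDensity t)).aestronglyMeasurable ?_
  filter_upwards [ae_restrict_mem measurableSet_Ioi] with s hs
  rw [norm_of_nonneg (mul_nonneg (heatK_nonneg (le_of_lt hs) x) (gaussDensity_pos ht s).le),
    ← mul_assoc]
  exact mul_le_mul_of_nonneg_right (hC s hs) (gaussDensity_pos ht s).le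

lemma btbmK_nonneg (ht : 0 < t) (x : EuclideanSpace ℝ (Fin d)) : 0 ≤ btbmK d t x :=
  mul_nonneg zero_le_two <| setIntegral_nonneg measurableSet_Ioi fun s hs =>
    mul_nonneg (heatK_nonneg (le_of_lt hs) x) (gaussDensity_pos ht s).le

lemma ofReal_btbmK (ht : 0 < t) {x : EuclideanSpace ℝ (Fin d)} (hx : x ≠ 0) :
    ENNReal.ofReal (btbmK d t x) =
      2 * ∫⁻ s in Ioi 0, ENNReal.ofReal (heatK d s x * gaussDensity t s) := by
  rw [btbmK_eq, ENNReal.ofReal_mul zero_le_two, ENNReal.ofReal_ofNat,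
    ofReal_integral_eq_lintegral_ofReal (integrableOn_heatK_mul_gaussDensity ht hx)]
  filter_upwards [ae_restrict_mem measurableSet_Ioi] with s hs
  exact mul_nonneg (heatK_nonneg (le_of_lt hs) x) (gaussDensity_pos ht s).le

lemma stronglyMeasurable_btbmK (t : ℝ) : StronglyMeasurable (btbmK d t) :=
  (StronglyMeasurable.integral_prod_right (f := fun x s => heatK d s x * gaussDensity t s)
    ((measurable_heatK_uncurry.comp measurable_swap).mul
      ((measurable_gaussDensity t).comp measurable_snd)).stronglyMeasurable).const_mul 2

lemma btbmK_scale {l : ℝ} (hl : 0 < l) (ht : 0 < t) (x : EuclideanSpace ℝ (Fin d)) :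
    btbmK d (l ^ 4 * t) (l • x) = (l ^ d)⁻¹ * btbmK d t x := by
  have hl2 : 0 < l ^ 2 := by positivity
  have hsub := integral_comp_mul_left_Ioi
    (fun s => heatK d s (l • x) * gaussDensity (l ^ 4 * t) s) 0 hl2
  rw [mul_zero, smul_eq_mul, eq_inv_mul_iff_mul_eq₀ hl2.ne'] at hsub
  have hpt : ∀ σ ∈ Ioi (0 : ℝ), heatK d (l ^ 2 * σ) (l • x) * gaussDensity (l ^ 4 * t) (l ^ 2 * σ)
      = (l ^ d)⁻¹ * (l ^ 2)⁻¹ * (heatK d σ x * gaussDensity t σ) := by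
    intro σ hσ
    rw [heatK_scale hl hσ, show l ^ 4 = (l ^ 2) ^ 2 by ring, gaussDensity_scale hl2 ht]
    ring
  rw [btbmK_eq, btbmK_eq, ← hsub, setIntegral_congr_fun measurableSet_Ioi hpt, integral_const_mul]
  field_simp

lemma integral_sq_btbmK_scale {l : ℝ} (hl : 0 < l) (ht : 0 < t) :
    ∫ x, btbmK d (l ^ 4 * t) x ^ 2 = (l ^ d)⁻¹ * ∫ x, btbmK d t x ^ 2 := by
  have hsub := Measure.integral_comp_smul volume (fun x => btbmK d (l ^ 4 * t) x ^ 2) l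
  simp_rw [btbmK_scale hl ht, mul_pow, integral_const_mul, finrank_euclideanSpace_fin,
    abs_of_pos (inv_pos.2 (pow_pos hl d)), smul_eq_mul] at hsub
  calc ∫ x, btbmK d (l ^ 4 * t) x ^ 2
      = ((l ^ d)⁻¹)⁻¹ * ((l ^ d)⁻¹ * ∫ x, btbmK d (l ^ 4 * t) x ^ 2) := by field_simp
    _ = (l ^ d)⁻¹ * ∫ x, btbmK d t x ^ 2 := by rw [← hsub]; field_simp

end btbmK

noncomputable def timeIntegral (d : ℕ) (t : ℝ) : ℝ≥0∞ :=
  ∫⁻ s in Ioi 0, ∫⁻ s' in Ioi 0,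
    ENNReal.ofReal ((2 * π * (s + s')) ^ (-(d : ℝ) / 2) * (gaussDensity t s * gaussDensity t s'))

section timeIntegral

variable {d : ℕ} {t : ℝ}

lemma ae_ne_zero (hd : 1 ≤ d) : ∀ᵐ x : EuclideanSpace ℝ (Fin d), x ≠ 0 := by
  obtain ⟨n, rfl⟩ := Nat.exists_eq_add_of_le' hd
  exact Measure.ae_ne volume 0

lemma lintegral_sq_btbmK (hd : 1 ≤ d) (ht : 0 < t) :
    ∫⁻ x, ENNReal.ofReal (btbmK d t x ^ 2) = 4 * timeIntegral d t := by
  set F : ℝ → EuclideanSpace ℝ (Fin d) → ℝ≥0∞ :=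
    fun s x => ENNReal.ofReal (heatK d s x * gaussDensity t s)
  have hF : Measurable (Function.uncurry F) :=
    (measurable_heatK_uncurry.mul ((measurable_gaussDensity t).comp measurable_fst)).ennreal_ofReal
  calc ∫⁻ x, ENNReal.ofReal (btbmK d t x ^ 2)
      = ∫⁻ x, 4 * (∫⁻ s in Ioi 0, F s x) ^ 2 := by
        -- at `x = 0` the `s`-integral diverges for `d ≥ 2`, and `btbmK` takes the junk value `0`
        refine lintegral_congr_ae ?_
        filter_upwards [ae_ne_zero hd] with x hx
        rw [ENNReal.ofReal_pow (btbmK_nonneg ht x), ofReal_btbmK ht hx]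
        ring
    _ = 4 * ∫⁻ s in Ioi 0, ∫⁻ s' in Ioi 0, ∫⁻ x, F s x * F s' x := by
        rw [lintegral_const_mul' _ _ (by norm_num), lintegral_sq_lintegral hF]
    _ = 4 * timeIntegral d t := by
        congr 1
        refine setLIntegral_congr_fun measurableSet_Ioi fun s (hs : 0 < s) =>
          setLIntegral_congr_fun measurableSet_Ioi fun s' (hs' : 0 < s') => ?_
        rw [ENNReal.ofReal_mul (by positivity), ← lintegral_heatK_mul_heatK hs hs',
          ← lintegral_mul_const' _ _ ENNReal.ofReal_ne_top]
        refine lintegral_congr fun x => ?_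
        rw [← ENNReal.ofReal_mul (mul_nonneg (heatK_nonneg hs.le x) (gaussDensity_pos ht s).le),
          ← ENNReal.ofReal_mul (mul_nonneg (heatK_nonneg hs.le x) (heatK_nonneg hs'.le x))]
        ring_nf

lemma timeIntegral_lt_top (hd : d ≤ 3) (ht : 0 < t) : timeIntegral d t < ∞ := by
  set e : ℝ := -(d : ℝ) / 2
  have he : e ≤ 0 := by simp only [e]; have : (0 : ℝ) ≤ d := d.cast_nonneg; linarith
  set U : ℝ → ℝ≥0∞ := fun s => ENNReal.ofReal (s ^ (e / 2) * gaussDensity t s)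
  have hU : ∫⁻ s in Ioi 0, U s < ∞ := by
    refine (integrableOn_rpow_mul_gaussDensity ht ?_).lintegral_lt_top
    have : (d : ℝ) ≤ 3 := by exact_mod_cast hd
    simp only [e]; linarith
  have hUm : Measurable U := by simp only [U]; fun_prop
  calc timeIntegral d t
      ≤ ∫⁻ s in Ioi 0, ∫⁻ s' in Ioi 0, ENNReal.ofReal ((2 * π) ^ e) * U s * U s' := by
        refine setLIntegral_mono' measurableSet_Ioi fun s (hs : 0 < s) =>
          setLIntegral_mono' measurableSet_Ioi fun s' (hs' : 0 < s') => ?_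
        have hg := gaussDensity_pos ht s
        have hg' := gaussDensity_pos ht s'
        simp only [U]
        rw [← ENNReal.ofReal_mul (by positivity), ← ENNReal.ofReal_mul (by positivity)]
        refine ENNReal.ofReal_le_ofReal ?_
        calc (2 * π * (s + s')) ^ e * (gaussDensity t s * gaussDensity t s')
            = (2 * π) ^ e * (s + s') ^ e * (gaussDensity t s * gaussDensity t s') := by
              rw [mul_rpow (by positivity) (by positivity)]
          _ ≤ (2 * π) ^ e * (s ^ (e / 2) * s' ^ (e / 2)) *
                (gaussDensity t s * gaussDensity t s') := by
              gcongr; exact add_rpow_le_rpow_half_mul_rpow_half hs hs' he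
          _ = _ := by ring
    _ = ENNReal.ofReal ((2 * π) ^ e) * (∫⁻ s in Ioi 0, U s) * ∫⁻ s in Ioi 0, U s := by
        rw [lintegral_lintegral_mul ((hUm.const_mul _).aemeasurable) hUm.aemeasurable,
          lintegral_const_mul _ hUm]
    _ < ∞ := ENNReal.mul_lt_top (ENNReal.mul_lt_top ENNReal.ofReal_lt_top hU) hU

lemma lintegral_rpow_le_timeIntegral (ht : 0 < t) :
    ENNReal.ofReal ((4 * π) ^ (-(d : ℝ) / 2) * gaussDensity t 1 ^ 2) *
      ∫⁻ s in Ioo 0 1, ENNReal.ofReal (s ^ (-(d : ℝ) / 2 + 1)) ≤ timeIntegral d t := by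
  set e : ℝ := -(d : ℝ) / 2
  have he : e ≤ 0 := by simp only [e]; have : (0 : ℝ) ≤ d := d.cast_nonneg; linarith
  have hg1 := gaussDensity_pos ht 1
  rw [← lintegral_const_mul' _ _ ENNReal.ofReal_ne_top]
  refine (setLIntegral_mono' measurableSet_Ioo fun s ⟨hs0, hs1⟩ => ?_).trans
    (lintegral_mono_set Ioo_subset_Ioi_self)
  calc ENNReal.ofReal ((4 * π) ^ e * gaussDensity t 1 ^ 2) * ENNReal.ofReal (s ^ (e + 1))
      = ∫⁻ _ in Ioc 0 s, ENNReal.ofReal ((4 * π * s) ^ e * gaussDensity t 1 ^ 2) := by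
        rw [setLIntegral_const, volume_Ioc, sub_zero,
          ← ENNReal.ofReal_mul (p := (4 * π) ^ e * gaussDensity t 1 ^ 2) (by positivity),
          ← ENNReal.ofReal_mul (p := (4 * π * s) ^ e * gaussDensity t 1 ^ 2) (by positivity),
          rpow_add_one hs0.ne', mul_rpow (by positivity) hs0.le]
        ring_nf
    _ ≤ ∫⁻ s' in Ioc 0 s, ENNReal.ofReal ((2 * π * (s + s')) ^ e *
          (gaussDensity t s * gaussDensity t s')) := by
        refine setLIntegral_mono' measurableSet_Ioc fun s' ⟨hs'0, hs's⟩ =>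
          ENNReal.ofReal_le_ofReal ?_
        have hk : (4 * π * s) ^ e ≤ (2 * π * (s + s')) ^ e :=
          rpow_le_rpow_of_nonpos (by positivity) (by nlinarith [pi_pos]) he
        have hg : gaussDensity t 1 ^ 2 ≤ gaussDensity t s * gaussDensity t s' :=
          sq (gaussDensity t 1) ▸ mul_le_mul (gaussDensity_le_of_le ht hs0.le hs1.le)
            (gaussDensity_le_of_le ht hs'0.le (hs's.trans hs1.le)) hg1.le
            (gaussDensity_pos ht s).le
        exact mul_le_mul hk hg (by positivity) (by positivity)
    _ ≤ _ := lintegral_mono_set Ioc_subset_Ioi_self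

lemma timeIntegral_pos (ht : 0 < t) : 0 < timeIntegral d t := by
  have hg1 := gaussDensity_pos ht 1
  refine lt_of_lt_of_le (ENNReal.mul_pos ?_ ?_) (lintegral_rpow_le_timeIntegral ht)
  · exact (ENNReal.ofReal_pos.2 (by positivity)).ne'
  · refine ((setLIntegral_pos_iff (by fun_prop)).2 ?_).ne'
    calc 0 < volume (Ioo (0 : ℝ) 1) := by simp
      _ ≤ volume (Function.support (fun s : ℝ => ENNReal.ofReal (s ^ (-(d : ℝ) / 2 + 1))) ∩
          Ioo 0 1) :=
        measure_mono fun s hs => ⟨(ENNReal.ofReal_pos.2 (rpow_pos_of_pos hs.1 _)).ne', hs⟩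

lemma timeIntegral_eq_top (hd : 4 ≤ d) (ht : 0 < t) : timeIntegral d t = ∞ := by
  refine eq_top_iff.2 (le_of_eq_of_le ?_ (lintegral_rpow_le_timeIntegral ht))
  have hni : ∫⁻ s in Ioo 0 1, ENNReal.ofReal (s ^ (-(d : ℝ) / 2 + 1)) = ∞ := by
    by_contra h
    have hint := (lintegral_ofReal_ne_top_iff_integrable (by fun_prop)
      ((ae_restrict_iff' measurableSet_Ioo).2 (.of_forall fun s hs => rpow_nonneg hs.1.le _))).1 h
    rw [← IntegrableOn, intervalIntegral.integrableOn_Ioo_rpow_iff zero_lt_one] at hint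
    have : (4 : ℝ) ≤ d := by exact_mod_cast hd
    linarith
  have hg1 := gaussDensity_pos ht 1
  rw [hni, ENNReal.mul_top (ENNReal.ofReal_pos.2 (by positivity)).ne']

lemma integral_sq_btbmK_pos (hd₁ : 1 ≤ d) (hd₃ : d ≤ 3) (ht : 0 < t) :
    0 < ∫ x, btbmK d t x ^ 2 := by
  rw [integral_eq_lintegral_of_nonneg_ae (.of_forall fun x => sq_nonneg _)
    ((stronglyMeasurable_btbmK t).aestronglyMeasurable.pow 2), lintegral_sq_btbmK hd₁ ht]
  exact ENNReal.toReal_pos (mul_ne_zero four_ne_zero (timeIntegral_pos ht).ne')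
    (ENNReal.mul_ne_top (by norm_num) (timeIntegral_lt_top hd₃ ht).ne)

end timeIntegral

end BTBM

open BTBM in
theorem btbm_kernel_L2_norm (d : ℕ) :
    (1 ≤ d → d ≤ 3 → ∃ C > (0 : ℝ), ∀ t > (0 : ℝ),
      ∫ x : EuclideanSpace ℝ (Fin d), (btbmK d t x) ^ 2 = C * t ^ (-(d : ℝ) / 4)) ∧
    (4 ≤ d → ∀ t > (0 : ℝ),
      ∫⁻ x : EuclideanSpace ℝ (Fin d), ENNReal.ofReal ((btbmK d t x) ^ 2) = ⊤) := by
  refine ⟨fun hd₁ hd₃ => ⟨∫ x, btbmK d 1 x ^ 2, integral_sq_btbmK_pos hd₁ hd₃ one_pos,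
    fun t ht => ?_⟩, fun hd₄ t ht => ?_⟩
  · have hl : 0 < t ^ (4 : ℝ)⁻¹ := rpow_pos_of_pos ht _
    have ht_eq : (t ^ (4 : ℝ)⁻¹) ^ 4 * 1 = t := by
      rw [mul_one, ← rpow_natCast, ← rpow_mul ht.le]; norm_num
    have hpow : ((t ^ (4 : ℝ)⁻¹) ^ d)⁻¹ = t ^ (-(d : ℝ) / 4) := by
      rw [← rpow_natCast, ← rpow_mul ht.le, ← rpow_neg ht.le]; ring_nf
    have := integral_sq_btbmK_scale (d := d) hl one_pos
    rwa [ht_eq, hpow, mul_comm] at this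
  · rw [lintegral_sq_btbmK (by omega) ht, timeIntegral_eq_top hd₄ ht, ENNReal.mul_top (by norm_num)]
end

section
/- For 1 ≤ d ≤ 3, there is a constant C depending only on d such that ∫_0^t ∫_{ℝ^d} [K^{BTBM}_s(x)]² dx ds = C · t^{(4-d)/4} for all t > 0. -/
open MeasureTheory Real

lemma btbm_pointwise (d : ℕ) {t : ℝ} (ht : 0 < t) (x : EuclideanSpace ℝ (Fin d))
    {σ : ℝ} (hσ : 0 < σ) :
    Real.sqrt t * (heatK d (Real.sqrt t * σ) x *
        ((2 * π * t) ^ (-(1 : ℝ) / 2) * Real.exp (-(Real.sqrt t * σ) ^ 2 / (2 * t))))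
    = t ^ (-(d : ℝ) / 4) * (heatK d σ ((t ^ (-(1 : ℝ) / 4)) • x) *
        ((2 * π * (1 : ℝ)) ^ (-(1 : ℝ) / 2) * Real.exp (-σ ^ 2 / (2 * 1)))) := by
  have hπ : (0 : ℝ) < 2 * π := by positivity
  have hst : (0 : ℝ) < Real.sqrt t := Real.sqrt_pos.mpr ht
  unfold heatK
  have A1 : (2 * π * (Real.sqrt t * σ)) ^ (-(d : ℝ) / 2)
      = (2 * π * σ) ^ (-(d : ℝ) / 2) * t ^ (-(d : ℝ) / 4) := by
    rw [show 2 * π * (Real.sqrt t * σ) = (2 * π * σ) * Real.sqrt t by ring,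
      Real.mul_rpow (by positivity) (Real.sqrt_nonneg t), Real.sqrt_eq_rpow,
      ← Real.rpow_mul ht.le, show (1:ℝ)/2 * (-(d:ℝ)/2) = -(d:ℝ)/4 by ring]
  have A2 : Real.exp (-‖x‖ ^ 2 / (2 * (Real.sqrt t * σ)))
      = Real.exp (-‖(t ^ (-(1 : ℝ) / 4)) • x‖ ^ 2 / (2 * σ)) := by
    congr 1
    have hc : (0 : ℝ) < t ^ (-(1 : ℝ) / 4) := Real.rpow_pos_of_pos ht _
    have hnorm : ‖(t ^ (-(1 : ℝ) / 4)) • x‖ = t ^ (-(1 : ℝ) / 4) * ‖x‖ := by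
      rw [norm_smul, Real.norm_eq_abs, abs_of_pos hc]
    rw [hnorm, mul_pow]
    have hc2 : (t ^ (-(1 : ℝ) / 4)) ^ 2 = (Real.sqrt t)⁻¹ := by
      rw [← Real.rpow_natCast (t ^ (-(1 : ℝ) / 4)) 2, ← Real.rpow_mul ht.le,
        Real.sqrt_eq_rpow, ← Real.rpow_neg ht.le]
      norm_num
    rw [hc2]
    field_simp
  have A3 : ((2 : ℝ) * π * t) ^ (-(1 : ℝ) / 2)
      = (2 * π * (1 : ℝ)) ^ (-(1 : ℝ) / 2) * t ^ (-(1 : ℝ) / 2) := by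
    rw [show (2 : ℝ) * π * t = (2 * π * 1) * t by ring,
      Real.mul_rpow (by positivity) ht.le]
  have A4 : Real.exp (-(Real.sqrt t * σ) ^ 2 / (2 * t)) = Real.exp (-σ ^ 2 / (2 * 1)) := by
    congr 1
    rw [mul_pow, Real.sq_sqrt ht.le]
    field_simp
  rw [A1, A2, A3, A4]
  have h5 : Real.sqrt t * t ^ (-(1 : ℝ) / 2) = 1 := by
    rw [Real.sqrt_eq_rpow, ← Real.rpow_add ht]
    norm_num
  linear_combination ((2 * π * σ) ^ (-(d : ℝ) / 2) * t ^ (-(d : ℝ) / 4) *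
      Real.exp (-‖(t ^ (-(1 : ℝ) / 4)) • x‖ ^ 2 / (2 * σ)) *
      ((2 * π * (1 : ℝ)) ^ (-(1 : ℝ) / 2) * Real.exp (-σ ^ 2 / (2 * 1)))) * h5

lemma btbmK_scaling (d : ℕ) {t : ℝ} (ht : 0 < t) (x : EuclideanSpace ℝ (Fin d)) :
    btbmK d t x = t ^ (-(d : ℝ) / 4) * btbmK d 1 ((t ^ (-(1 : ℝ) / 4)) • x) := by
  have hst : (0 : ℝ) < Real.sqrt t := Real.sqrt_pos.mpr ht
  unfold btbmK
  have key := MeasureTheory.integral_comp_mul_left_Ioi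
      (fun s => heatK d s x * ((2 * π * t) ^ (-(1 : ℝ) / 2) * Real.exp (-s ^ 2 / (2 * t))))
      0 hst
  simp only [mul_zero] at key
  have h1 : (∫ s in Set.Ioi (0 : ℝ),
        heatK d s x * ((2 * π * t) ^ (-(1 : ℝ) / 2) * Real.exp (-s ^ 2 / (2 * t))))
      = Real.sqrt t • ∫ σ in Set.Ioi (0 : ℝ),
          heatK d (Real.sqrt t * σ) x * ((2 * π * t) ^ (-(1 : ℝ) / 2) *
            Real.exp (-(Real.sqrt t * σ) ^ 2 / (2 * t))) := by
    rw [key, smul_smul, mul_inv_cancel₀ hst.ne', one_smul]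
  rw [h1, ← MeasureTheory.integral_smul]
  have h2 : t ^ (-(d : ℝ) / 4) * (2 * ∫ σ in Set.Ioi (0 : ℝ),
        heatK d σ ((t ^ (-(1 : ℝ) / 4)) • x) *
          ((2 * π * (1 : ℝ)) ^ (-(1 : ℝ) / 2) * Real.exp (-σ ^ 2 / (2 * 1))))
      = 2 * ∫ σ in Set.Ioi (0 : ℝ), t ^ (-(d : ℝ) / 4) *
          (heatK d σ ((t ^ (-(1 : ℝ) / 4)) • x) *
            ((2 * π * (1 : ℝ)) ^ (-(1 : ℝ) / 2) * Real.exp (-σ ^ 2 / (2 * 1)))) := by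
    rw [MeasureTheory.integral_const_mul]; ring
  rw [h2]
  congr 1
  refine MeasureTheory.setIntegral_congr_fun measurableSet_Ioi (fun σ hσ => ?_)
  simpa [smul_eq_mul] using btbm_pointwise d ht x hσ

lemma btbm_space_integral (d : ℕ) {t : ℝ} (ht : 0 < t) :
    (∫ x : EuclideanSpace ℝ (Fin d), (btbmK d t x) ^ 2)
      = t ^ (-(d : ℝ) / 4) * ∫ x : EuclideanSpace ℝ (Fin d), (btbmK d 1 x) ^ 2 := by
  have h1 : ∀ x : EuclideanSpace ℝ (Fin d), (btbmK d t x) ^ 2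
      = (t ^ (-(d : ℝ) / 4)) ^ 2 * (fun y => (btbmK d 1 y) ^ 2) ((t ^ (-(1 : ℝ) / 4)) • x) := by
    intro x
    rw [btbmK_scaling d ht x, mul_pow]
  simp_rw [h1]
  rw [MeasureTheory.integral_const_mul,
    MeasureTheory.Measure.integral_comp_smul (μ := volume) (fun y => (btbmK d 1 y) ^ 2)
      (t ^ (-(1 : ℝ) / 4))]
  rw [finrank_euclideanSpace_fin]
  have hc : ((t ^ (-(1 : ℝ) / 4)) ^ d)⁻¹ = t ^ ((d : ℝ) / 4) := by
    rw [← Real.rpow_natCast (t ^ (-(1 : ℝ) / 4)) d, ← Real.rpow_mul ht.le,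
      ← Real.rpow_neg ht.le]
    congr 1
    ring
  rw [hc, abs_of_pos (Real.rpow_pos_of_pos ht _), smul_eq_mul]
  rw [show ((t ^ (-(d : ℝ) / 4)) ^ 2 : ℝ) = t ^ (-(d : ℝ) / 2) by
    rw [← Real.rpow_natCast (t ^ (-(d : ℝ) / 4)) 2, ← Real.rpow_mul ht.le,
      show -(d : ℝ) / 4 * (2 : ℕ) = -(d : ℝ) / 2 by push_cast; ring]]
  rw [← mul_assoc, ← Real.rpow_add ht, show -(d : ℝ) / 2 + (d : ℝ) / 4 = -(d : ℝ) / 4 by ring]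

theorem btbm_kernel_time_integrated_L2 (d : ℕ) (hd1 : 1 ≤ d) (hd3 : d ≤ 3) :
    ∃ C : ℝ, ∀ t > (0 : ℝ),
      (∫ s in (0 : ℝ)..t, ∫ x : EuclideanSpace ℝ (Fin d), (btbmK d s x) ^ 2)
        = C * t ^ ((4 - (d : ℝ)) / 4) := by
  set A : ℝ := ∫ x : EuclideanSpace ℝ (Fin d), (btbmK d 1 x) ^ 2 with hA
  have hd3' : (d : ℝ) ≤ 3 := by exact_mod_cast hd3
  have hr : (-1 : ℝ) < -(d : ℝ) / 4 := by linarith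
  have hr1 : -(d : ℝ) / 4 + 1 = (4 - (d : ℝ)) / 4 := by ring
  have hr1pos : (0 : ℝ) < (4 - (d : ℝ)) / 4 := by linarith
  refine ⟨A / ((4 - (d : ℝ)) / 4), fun t ht => ?_⟩
  have hcongr : (∫ s in (0 : ℝ)..t, ∫ x : EuclideanSpace ℝ (Fin d), (btbmK d s x) ^ 2)
      = ∫ s in (0 : ℝ)..t, s ^ (-(d : ℝ) / 4) * A := by
    rw [intervalIntegral.integral_of_le ht.le, intervalIntegral.integral_of_le ht.le]
    refine MeasureTheory.setIntegral_congr_fun measurableSet_Ioc (fun s hs => ?_)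
    exact btbm_space_integral d hs.1
  rw [hcongr, intervalIntegral.integral_mul_const, integral_rpow (Or.inl hr),
    Real.zero_rpow (by linarith [hr1] : -(d : ℝ) / 4 + 1 ≠ 0), hr1]
  field_simp
  ring
end

section
/- For 1 ≤ d ≤ 3 and for all u, v, with u, v > 0, one has the identity ∫_{ℝ^d} [K^{BTBM}_u(x) - K^{BTBM}_v(x)]² dx = K^{(2)}_{u,u}(0) + K^{(2)}_{v,v}(0) - 2 K^{(2)}_{u,v}(0), where K^{(2)}_{u,v}(0) = 4 ∫_0^∞ ∫_0^∞ (2π(r₁+r₂))^{-d/2} (2πu)^{-1/2} e^{-r₁²/(2u)} (2πv)^{-1/2} e^{-r₂²/(2v)} dr₁ dr₂. -/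
/-!
Expanding the square reduces the identity to the cross terms `∫ K_u K_v = K⁽²⁾_{u,v}(0)`.
Since `K_t` is a mixture over the Brownian time `s` of heat kernels `p_s`, Tonelli and the
Gaussian identity `∫ p_{r₁} p_{r₂} = p_{r₁+r₂}(0)` give this identity between extended-real
integrals. They are finite for `d ≤ 3`: `(r₁ + r₂)^{-d/2} ≤ (r₁ r₂)^{-d/4}` and `r^{-d/4}` is
integrable at `0` since `d/4 < 1`. Finiteness is what allows passing back to real integrals.
-/

open MeasureTheory Real

/-- The diagonal value at `0` of the `2`-Brownian-times Brownian motion density. -/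
noncomputable def twoBtK (d : ℕ) (u v : ℝ) : ℝ :=
  4 * ∫ r₁ in Set.Ioi (0 : ℝ), ∫ r₂ in Set.Ioi (0 : ℝ),
    (2 * π * (r₁ + r₂)) ^ (-(d : ℝ) / 2) *
      ((2 * π * u) ^ (-(1 : ℝ) / 2) * Real.exp (-r₁ ^ 2 / (2 * u))) *
      ((2 * π * v) ^ (-(1 : ℝ) / 2) * Real.exp (-r₂ ^ 2 / (2 * v)))

open Set
open scoped ENNReal

section Integration

variable {α β : Type*} [MeasurableSpace α] [MeasurableSpace β] {μ : Measure α} {ν : Measure β}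

theorem integral_sub_sq {f g : α → ℝ} (hff : Integrable (fun a => f a * f a) μ)
    (hgg : Integrable (fun a => g a * g a) μ) (hfg : Integrable (fun a => f a * g a) μ) :
    ∫ a, (f a - g a) ^ 2 ∂μ = ∫ a, f a * f a ∂μ + ∫ a, g a * g a ∂μ - 2 * ∫ a, f a * g a ∂μ := by
  have hsq : ∀ a, (f a - g a) ^ 2 = f a * f a + g a * g a - 2 * (f a * g a) := fun a => by ring
  simp_rw [hsq]
  rw [integral_sub (by exact hff.add hgg) (hfg.const_mul 2), integral_add hff hgg,
    integral_const_mul]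

theorem lintegral_lintegral_mul_lintegral [SFinite μ] [SFinite ν] {F G : α → β → ℝ≥0∞}
    (hF : Measurable (Function.uncurry F)) (hG : Measurable (Function.uncurry G)) :
    ∫⁻ a, (∫⁻ b, F a b ∂ν) * (∫⁻ b, G a b ∂ν) ∂μ
      = ∫⁻ b₁, ∫⁻ b₂, ∫⁻ a, F a b₁ * G a b₂ ∂μ ∂ν ∂ν := by
  have hprod : ∀ a, (∫⁻ b, F a b ∂ν) * (∫⁻ b, G a b ∂ν) = ∫⁻ b₁, ∫⁻ b₂, F a b₁ * G a b₂ ∂ν ∂ν :=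
    fun a => by
      rw [← lintegral_mul_const'' _ hF.of_uncurry_left.aemeasurable]
      exact lintegral_congr fun b₁ => (lintegral_const_mul'' _ hG.of_uncurry_left.aemeasurable).symm
  simp_rw [hprod]
  have hinner : Measurable (Function.uncurry fun a b₁ => ∫⁻ b₂, F a b₁ * G a b₂ ∂ν) :=
    Measurable.lintegral_prod_right' (f := fun p : (α × β) × β => F p.1.1 p.1.2 * G p.1.1 p.2)
      (by fun_prop)
  rw [lintegral_lintegral_swap hinner.aemeasurable]
  refine lintegral_congr fun b₁ => lintegral_lintegral_swap ?_
  exact Measurable.aemeasurable (by fun_prop)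

theorem integral_integral_eq_toReal_lintegral_lintegral [SFinite ν] {F : α → β → ℝ}
    (hF : Measurable (Function.uncurry F)) (hnonneg : ∀ᵐ a ∂μ, 0 ≤ᵐ[ν] F a)
    (hfin : ∫⁻ a, ∫⁻ b, ENNReal.ofReal (F a b) ∂ν ∂μ ≠ ∞) :
    ∫ a, ∫ b, F a b ∂ν ∂μ = (∫⁻ a, ∫⁻ b, ENNReal.ofReal (F a b) ∂ν ∂μ).toReal := by
  have hmeas : Measurable fun a => ∫⁻ b, ENNReal.ofReal (F a b) ∂ν :=
    (ENNReal.measurable_ofReal.comp hF).lintegral_prod_right'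
  rw [← integral_toReal hmeas.aemeasurable (ae_lt_top hmeas hfin)]
  exact integral_congr_ae (hnonneg.mono fun a ha =>
    integral_eq_lintegral_of_nonneg_ae ha hF.of_uncurry_left.aestronglyMeasurable)

end Integration

theorem rpow_add_le_rpow_mul_rpow {a b s : ℝ} (ha : 0 < a) (hb : 0 < b) (hs : s ≤ 0) :
    (a + b) ^ s ≤ a ^ (s / 2) * b ^ (s / 2) := by
  have hsqrt : √(a * b) ≤ a + b := Real.sqrt_le_iff.2 ⟨by positivity, by nlinarith⟩
  calc (a + b) ^ s ≤ √(a * b) ^ s := rpow_le_rpow_of_nonpos (by positivity) hsqrt hs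
    _ = a ^ (s / 2) * b ^ (s / 2) := by
      rw [sqrt_eq_rpow, ← rpow_mul (by positivity), mul_rpow ha.le hb.le]
      ring_nf

noncomputable def gaussK (t r : ℝ) : ℝ :=
  (2 * π * t) ^ (-(1 : ℝ) / 2) * Real.exp (-r ^ 2 / (2 * t))

theorem gaussK_pos {t : ℝ} (ht : 0 < t) (r : ℝ) : 0 < gaussK t r := by
  unfold gaussK; positivity

theorem lintegral_rpow_mul_gaussK_lt_top {t q : ℝ} (ht : 0 < t) (hq : -1 < q) :
    ∫⁻ r in Ioi 0, ENNReal.ofReal (r ^ q * gaussK t r) < ∞ := by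
  have hint : IntegrableOn
      (fun r => (2 * π * t) ^ (-(1 : ℝ) / 2) * (r ^ q * rexp (-(1 / (2 * t)) * r ^ 2))) (Ioi 0) :=
    (integrableOn_rpow_mul_exp_neg_mul_sq (by positivity) hq).const_mul _
  refine (hint.congr_fun (fun r _ => ?_) measurableSet_Ioi).lintegral_lt_top
  simp only [gaussK]
  ring_nf

section HeatKernel

variable {d : ℕ}

theorem heatK_pos {s : ℝ} (hs : 0 < s) (x : EuclideanSpace ℝ (Fin d)) : 0 < heatK d s x := by
  unfold heatK; positivity

theorem heatK_mul_heatK {r₁ r₂ : ℝ} (h₁ : 0 < r₁) (h₂ : 0 < r₂) (x : EuclideanSpace ℝ (Fin d)) :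
    heatK d r₁ x * heatK d r₂ x
      = (2 * π * r₁) ^ (-(d : ℝ) / 2) * (2 * π * r₂) ^ (-(d : ℝ) / 2)
        * rexp (-((r₁ + r₂) / (2 * r₁ * r₂)) * ‖x‖ ^ 2) := by
  unfold heatK
  rw [mul_mul_mul_comm, ← Real.exp_add]
  congr 2
  field_simp
  ring

theorem integral_heatK_mul_heatK {r₁ r₂ : ℝ} (h₁ : 0 < r₁) (h₂ : 0 < r₂) :
    ∫ x : EuclideanSpace ℝ (Fin d), heatK d r₁ x * heatK d r₂ x
      = (2 * π * (r₁ + r₂)) ^ (-(d : ℝ) / 2) := by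
  have hb : 0 < (r₁ + r₂) / (2 * r₁ * r₂) := by positivity
  simp_rw [heatK_mul_heatK h₁ h₂]
  rw [integral_const_mul, GaussianFourier.integral_rexp_neg_mul_sq_norm hb,
    finrank_euclideanSpace_fin, ← mul_rpow (by positivity) (by positivity), neg_div,
    rpow_neg (by positivity), rpow_neg (by positivity), ← inv_rpow (by positivity),
    ← inv_rpow (by positivity), ← mul_rpow (by positivity) (by positivity)]
  congr 1
  field_simp

theorem integrable_heatK_mul_heatK {r₁ r₂ : ℝ} (h₁ : 0 < r₁) (h₂ : 0 < r₂) :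
    Integrable fun x : EuclideanSpace ℝ (Fin d) => heatK d r₁ x * heatK d r₂ x :=
  Integrable.of_integral_ne_zero <| by
    rw [integral_heatK_mul_heatK h₁ h₂]
    positivity

theorem lintegral_ofReal_heatK_mul_heatK {r₁ r₂ a b : ℝ} (h₁ : 0 < r₁) (h₂ : 0 < r₂)
    (ha : 0 ≤ a) (hb : 0 ≤ b) :
    ∫⁻ x : EuclideanSpace ℝ (Fin d),
        ENNReal.ofReal (heatK d r₁ x * a) * ENNReal.ofReal (heatK d r₂ x * b)
      = ENNReal.ofReal ((2 * π * (r₁ + r₂)) ^ (-(d : ℝ) / 2) * a * b) := by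
  have hprod : ∀ x, ENNReal.ofReal (heatK d r₁ x * a) * ENNReal.ofReal (heatK d r₂ x * b)
      = ENNReal.ofReal (heatK d r₁ x * heatK d r₂ x * (a * b)) := fun x => by
    rw [← ENNReal.ofReal_mul (mul_nonneg (heatK_pos h₁ x).le ha)]
    ring_nf
  simp_rw [hprod]
  rw [← ofReal_integral_eq_lintegral_ofReal ((integrable_heatK_mul_heatK h₁ h₂).mul_const _)
    (ae_of_all _ fun x => by have := heatK_pos h₁ x; have := heatK_pos h₂ x; positivity),
    integral_mul_const, integral_heatK_mul_heatK h₁ h₂, ← mul_assoc]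

end HeatKernel

section BrownianTime

variable {d : ℕ}

/-- The integrals in `btbmK` and `twoBtK`, without the factors `2` and `4`, as lintegrals in
`ℝ≥0∞`: there Tonelli needs no integrability, and finiteness is proved afterwards. -/
noncomputable def btbmL (d : ℕ) (t : ℝ) (x : EuclideanSpace ℝ (Fin d)) : ℝ≥0∞ :=
  ∫⁻ s in Ioi 0, ENNReal.ofReal (heatK d s x * gaussK t s)

noncomputable def twoBtL (d : ℕ) (u v : ℝ) : ℝ≥0∞ :=
  ∫⁻ r₁ in Ioi 0, ∫⁻ r₂ in Ioi 0,
    ENNReal.ofReal ((2 * π * (r₁ + r₂)) ^ (-(d : ℝ) / 2) * gaussK u r₁ * gaussK v r₂)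

theorem measurable_heatK_mul_gaussK (t : ℝ) :
    Measurable (Function.uncurry fun (x : EuclideanSpace ℝ (Fin d)) (s : ℝ) =>
      heatK d s x * gaussK t s) := by
  unfold heatK gaussK Function.uncurry
  fun_prop

theorem measurable_ofReal_heatK_mul_gaussK (t : ℝ) :
    Measurable (Function.uncurry fun (x : EuclideanSpace ℝ (Fin d)) (s : ℝ) =>
      ENNReal.ofReal (heatK d s x * gaussK t s)) :=
  ENNReal.measurable_ofReal.comp (measurable_heatK_mul_gaussK t)

theorem measurable_btbmL (t : ℝ) : Measurable (btbmL d t) :=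
  (measurable_ofReal_heatK_mul_gaussK t).lintegral_prod_right'

theorem btbmK_eq_toReal_btbmL {t : ℝ} (ht : 0 < t) (x : EuclideanSpace ℝ (Fin d)) :
    btbmK d t x = 2 * (btbmL d t x).toReal := by
  refine congrArg (2 * ·) (integral_eq_lintegral_of_nonneg_ae ?_ ?_)
  · exact (ae_restrict_iff' measurableSet_Ioi).2 (ae_of_all _ fun s hs =>
      (mul_pos (heatK_pos hs x) (gaussK_pos ht s)).le)
  · exact (measurable_heatK_mul_gaussK t).of_uncurry_left.aestronglyMeasurable

theorem lintegral_btbmL_mul_btbmL {u v : ℝ} (hu : 0 < u) (hv : 0 < v) :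
    ∫⁻ x, btbmL d u x * btbmL d v x = twoBtL d u v := by
  refine (lintegral_lintegral_mul_lintegral (measurable_ofReal_heatK_mul_gaussK u)
    (measurable_ofReal_heatK_mul_gaussK v)).trans ?_
  refine setLIntegral_congr_fun measurableSet_Ioi fun r₁ hr₁ => ?_
  refine setLIntegral_congr_fun measurableSet_Ioi fun r₂ hr₂ => ?_
  exact lintegral_ofReal_heatK_mul_heatK hr₁ hr₂ (gaussK_pos hu r₁).le (gaussK_pos hv r₂).le

theorem ofReal_rpow_add_mul_gaussK_mul_gaussK_le {s u v r₁ r₂ : ℝ} (hs : s ≤ 0) (hu : 0 < u)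
    (hv : 0 < v) (hr₁ : 0 < r₁) (hr₂ : 0 < r₂) :
    ENNReal.ofReal ((2 * π * (r₁ + r₂)) ^ s * gaussK u r₁ * gaussK v r₂)
      ≤ ENNReal.ofReal ((2 * π) ^ s) * (ENNReal.ofReal (r₁ ^ (s / 2) * gaussK u r₁)
          * ENNReal.ofReal (r₂ ^ (s / 2) * gaussK v r₂)) := by
  have hgu := gaussK_pos hu r₁
  have hgv := gaussK_pos hv r₂
  rw [← ENNReal.ofReal_mul (by positivity), ← ENNReal.ofReal_mul (by positivity)]
  refine ENNReal.ofReal_le_ofReal ?_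
  calc (2 * π * (r₁ + r₂)) ^ s * gaussK u r₁ * gaussK v r₂
      = (2 * π) ^ s * (r₁ + r₂) ^ s * gaussK u r₁ * gaussK v r₂ := by
        rw [mul_rpow (by positivity) (by positivity)]
    _ ≤ (2 * π) ^ s * (r₁ ^ (s / 2) * r₂ ^ (s / 2)) * gaussK u r₁ * gaussK v r₂ := by
        gcongr
        exact rpow_add_le_rpow_mul_rpow hr₁ hr₂ hs
    _ = (2 * π) ^ s * (r₁ ^ (s / 2) * gaussK u r₁ * (r₂ ^ (s / 2) * gaussK v r₂)) := by ring

theorem twoBtL_lt_top (hd : d ≤ 3) {u v : ℝ} (hu : 0 < u) (hv : 0 < v) : twoBtL d u v < ∞ := by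
  set s : ℝ := -(d : ℝ) / 2
  have hd' : (d : ℝ) ≤ 3 := by exact_mod_cast hd
  have hs : s ≤ 0 := by simp only [s]; linarith [(d.cast_nonneg : (0 : ℝ) ≤ d)]
  have hs2 : -1 < s / 2 := by simp only [s]; linarith
  set f : ℝ → ℝ → ℝ≥0∞ := fun t r => ENNReal.ofReal (r ^ (s / 2) * gaussK t r)
  have hf : ∀ t, Measurable (f t) := fun t => by simp only [f, gaussK]; fun_prop
  calc twoBtL d u v
      ≤ ∫⁻ r₁ in Ioi 0, ∫⁻ r₂ in Ioi 0, ENNReal.ofReal ((2 * π) ^ s) * (f u r₁ * f v r₂) :=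
        setLIntegral_mono' measurableSet_Ioi fun r₁ hr₁ =>
          setLIntegral_mono' measurableSet_Ioi fun r₂ hr₂ =>
            ofReal_rpow_add_mul_gaussK_mul_gaussK_le hs hu hv hr₁ hr₂
    _ = ENNReal.ofReal ((2 * π) ^ s) * ((∫⁻ r in Ioi 0, f u r) * ∫⁻ r in Ioi 0, f v r) := by
        simp_rw [lintegral_const_mul' _ _ ENNReal.ofReal_ne_top]
        rw [lintegral_lintegral_mul (hf u).aemeasurable (hf v).aemeasurable]
    _ < ∞ := ENNReal.mul_lt_top ENNReal.ofReal_lt_top (ENNReal.mul_lt_top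
        (lintegral_rpow_mul_gaussK_lt_top hu hs2) (lintegral_rpow_mul_gaussK_lt_top hv hs2))

theorem twoBtK_eq_toReal_twoBtL (hd : d ≤ 3) {u v : ℝ} (hu : 0 < u) (hv : 0 < v) :
    twoBtK d u v = 4 * (twoBtL d u v).toReal := by
  refine congrArg (4 * ·) (integral_integral_eq_toReal_lintegral_lintegral ?_ ?_
    (twoBtL_lt_top hd hu hv).ne)
  · unfold Function.uncurry
    fun_prop
  · refine (ae_restrict_iff' measurableSet_Ioi).2 (ae_of_all _ fun r₁ (hr₁ : 0 < r₁) => ?_)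
    refine (ae_restrict_iff' measurableSet_Ioi).2 (ae_of_all _ fun r₂ (hr₂ : 0 < r₂) => ?_)
    have hgu := gaussK_pos hu r₁
    have hgv := gaussK_pos hv r₂
    unfold gaussK at hgu hgv
    positivity

theorem btbmK_mul_btbmK {u v : ℝ} (hu : 0 < u) (hv : 0 < v) (x : EuclideanSpace ℝ (Fin d)) :
    btbmK d u x * btbmK d v x = 4 * (btbmL d u x * btbmL d v x).toReal := by
  rw [btbmK_eq_toReal_btbmL hu, btbmK_eq_toReal_btbmL hv, ENNReal.toReal_mul]
  ring

theorem measurable_btbmL_mul_btbmL (u v : ℝ) :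
    Measurable fun x : EuclideanSpace ℝ (Fin d) => btbmL d u x * btbmL d v x :=
  (measurable_btbmL u).mul (measurable_btbmL v)

theorem lintegral_btbmL_mul_btbmL_ne_top (hd : d ≤ 3) {u v : ℝ} (hu : 0 < u) (hv : 0 < v) :
    ∫⁻ x, btbmL d u x * btbmL d v x ≠ ∞ := by
  rw [lintegral_btbmL_mul_btbmL hu hv]
  exact (twoBtL_lt_top hd hu hv).ne

theorem integrable_btbmK_mul_btbmK (hd : d ≤ 3) {u v : ℝ} (hu : 0 < u) (hv : 0 < v) :
    Integrable fun x => btbmK d u x * btbmK d v x := by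
  simp_rw [btbmK_mul_btbmK hu hv]
  exact (integrable_toReal_of_lintegral_ne_top (measurable_btbmL_mul_btbmL u v).aemeasurable
    (lintegral_btbmL_mul_btbmL_ne_top hd hu hv)).const_mul 4

theorem integral_btbmK_mul_btbmK (hd : d ≤ 3) {u v : ℝ} (hu : 0 < u) (hv : 0 < v) :
    ∫ x, btbmK d u x * btbmK d v x = twoBtK d u v := by
  have hmeas := measurable_btbmL_mul_btbmL (d := d) u v
  simp_rw [btbmK_mul_btbmK hu hv]
  rw [integral_const_mul, integral_toReal hmeas.aemeasurable
    (ae_lt_top hmeas (lintegral_btbmL_mul_btbmL_ne_top hd hu hv)),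
    lintegral_btbmL_mul_btbmL hu hv, twoBtK_eq_toReal_twoBtL hd hu hv]

end BrownianTime

theorem btbm_L2_difference_identity_general (d : ℕ) (hd3 : d ≤ 3)
    (u v : ℝ) (hu : 0 < u) (hv : 0 < v) :
    ∫ x : EuclideanSpace ℝ (Fin d), (btbmK d u x - btbmK d v x) ^ 2
      = twoBtK d u u + twoBtK d v v - 2 * twoBtK d u v := by
  rw [integral_sub_sq (integrable_btbmK_mul_btbmK hd3 hu hu)
    (integrable_btbmK_mul_btbmK hd3 hv hv) (integrable_btbmK_mul_btbmK hd3 hu hv),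
    integral_btbmK_mul_btbmK hd3 hu hu, integral_btbmK_mul_btbmK hd3 hv hv,
    integral_btbmK_mul_btbmK hd3 hu hv]

theorem btbm_L2_difference_identity (d : ℕ) (hd1 : 1 ≤ d) (hd3 : d ≤ 3)
    (u v : ℝ) (hu : 0 < u) (hv : 0 < v) :
    ∫ x : EuclideanSpace ℝ (Fin d), (btbmK d u x - btbmK d v x) ^ 2
      = twoBtK d u u + twoBtK d v v - 2 * twoBtK d u v :=
  btbm_L2_difference_identity_general d hd3 u v hu hv
end
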